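/- Let (X⁺, T) be a transitive locally compact one-sided countable Markov shift with infinite alphabet and φ a λ-transient potential with summable variations. The Martin compactification (X̂⁺, ρ) (the completion of X⁺ under the Martin metric ρ) is compact, and the Martin boundary M = X̂⁺ \ X⁺ is closed and non-empty; moreover, if a sequence xₙ ∈ X⁺ ρ-converges to a boundary point, then xₙ eventually leaves every compact subset of (X⁺, d). -/

import Mathlib

open MeasureTheory ENNReal Filter Topology

variable {S : Type*}

/-- The one-sided topological Markov shift over alphabet `S` with transition relation `Adj`. -/
abbrev MShift (Adj : S → S → Prop) : Type _ :=
  {x : ℕ → S // ∀ i, Adj (x i) (x (i + 1))}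

/-- The left shift map. -/
def shiftMap (Adj : S → S → Prop) (x : MShift Adj) : MShift Adj :=
  ⟨fun i => x.1 (i + 1), fun i => x.2 (i + 1)⟩

/-- The Ruelle (transfer) operator on non-negative functions. -/
noncomputable def Ruelle (Adj : S → S → Prop) (φ : MShift Adj → ℝ)
    (f : MShift Adj → ℝ≥0∞) (x : MShift Adj) : ℝ≥0∞ :=
  ∑' y : {y : MShift Adj // shiftMap Adj y = x}, ENNReal.ofReal (Real.exp (φ y.1)) * f y.1

/-- The Green's function `G(f, x | λ) = Σ_n λ⁻ⁿ (L_φⁿ f)(x)`. -/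
noncomputable def Green (Adj : S → S → Prop) (φ : MShift Adj → ℝ) (lam : ℝ)
    (f : MShift Adj → ℝ≥0∞) (x : MShift Adj) : ℝ≥0∞ :=
  ∑' n : ℕ, ENNReal.ofReal ((lam ^ n)⁻¹) * ((Ruelle Adj φ)^[n] f) x

/-- The cylinder set `[a] = {x : x₀ = a}`. -/
def cylA (Adj : S → S → Prop) (a : S) : Set (MShift Adj) := {x | x.1 0 = a}

/-- Indicator function of the cylinder `[a]`. -/
noncomputable def cylInd (Adj : S → S → Prop) (a : S) : MShift Adj → ℝ≥0∞ :=
  (cylA Adj a).indicator 1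

/-- Topological transitivity: every state can be reached from every state. -/
def TransitiveShift (Adj : S → S → Prop) : Prop :=
  ∀ a b : S, ∃ (n : ℕ) (x : MShift Adj), x.1 0 = a ∧ ((shiftMap Adj)^[n] x).1 0 = b

/-- Local compactness: each state has finitely many followers. -/
def LocFin (Adj : S → S → Prop) : Prop := ∀ a : S, {b : S | Adj a b}.Finite

/-- Set of values `|φ(x) − φ(y)|` over pairs agreeing in their first `m` coordinates. -/
def varSet (Adj : S → S → Prop) (φ : MShift Adj → ℝ) (m : ℕ) : Set ℝ :=
  {r | ∃ x y : MShift Adj, (∀ i < m, x.1 i = y.1 i) ∧ r = |φ x - φ y|}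

/-- The `m`-th variation of `φ`. -/
noncomputable def Var (Adj : S → S → Prop) (φ : MShift Adj → ℝ) (m : ℕ) : ℝ :=
  sSup (varSet Adj φ m)

/-- `φ` has summable variations. -/
def SummableVar (Adj : S → S → Prop) (φ : MShift Adj → ℝ) : Prop :=
  (∀ m, BddAbove (varSet Adj φ m)) ∧ Summable (Var Adj φ)

/-- A non-negative real function viewed as `ℝ≥0∞`-valued. -/
noncomputable def ofR {Adj : S → S → Prop} (f : MShift Adj → ℝ) : MShift Adj → ℝ≥0∞ :=
  fun x => ENNReal.ofReal (f x)

/-- `λ`-transience: the Green's function of every cylinder is finite everywhere. -/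
def Transient (Adj : S → S → Prop) (φ : MShift Adj → ℝ) (lam : ℝ) : Prop :=
  ∀ (a : S) (x : MShift Adj), Green Adj φ lam (cylInd Adj a) x ≠ ⊤

/-- The cylinder set of a (non-empty) word. -/
def cylSigma (Adj : S → S → Prop) (w : (m : ℕ) × (Fin (m + 1) → S)) :
    Set (MShift Adj) :=
  {x | ∀ i : Fin (w.1 + 1), x.1 i = w.2 i}

/-- Real-valued Martin kernel of a set `B`, with origin cylinder `[o]`. -/
noncomputable def MartinKr (Adj : S → S → Prop) (φ : MShift Adj → ℝ) (lam : ℝ) (o : S)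
    (B : Set (MShift Adj)) (x : MShift Adj) : ℝ :=
  (Green Adj φ lam (B.indicator 1) x / Green Adj φ lam (cylInd Adj o) x).toReal

/-- The Martin (pseudo-)metric associated to an enumeration `e` of words and bounds `C`. -/
noncomputable def martinRho (Adj : S → S → Prop) (φ : MShift Adj → ℝ) (lam : ℝ) (o : S)
    (e : ℕ → (m : ℕ) × (Fin (m + 1) → S)) (C : ℕ → ℝ) (x y : MShift Adj) : ℝ :=
  ∑' i : ℕ, ((2 : ℝ) ^ i * (C i + 1))⁻¹ *
    (|MartinKr Adj φ lam o (cylSigma Adj (e i)) x -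
        MartinKr Adj φ lam o (cylSigma Adj (e i)) y| +
      |Set.indicator (cylSigma Adj (e i)) (fun _ => (1 : ℝ)) x -
        Set.indicator (cylSigma Adj (e i)) (fun _ => (1 : ℝ)) y|)


/-- A sequence is Cauchy for the Martin metric. -/
def RhoCauchy (Adj : S → S → Prop) (φ : MShift Adj → ℝ) (lam : ℝ) (o : S)
    (e : ℕ → (m : ℕ) × (Fin (m + 1) → S)) (C : ℕ → ℝ) (u : ℕ → MShift Adj) : Prop :=
  ∀ ε > (0 : ℝ), ∃ N : ℕ, ∀ m ≥ N, ∀ n ≥ N,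
    martinRho Adj φ lam o e C (u m) (u n) < ε

/-- A sequence `ρ`-converges to a point of `X⁺`. -/
def RhoTendsto (Adj : S → S → Prop) (φ : MShift Adj → ℝ) (lam : ℝ) (o : S)
    (e : ℕ → (m : ℕ) × (Fin (m + 1) → S)) (C : ℕ → ℝ) (u : ℕ → MShift Adj)
    (x : MShift Adj) : Prop :=
  Filter.Tendsto (fun n => martinRho Adj φ lam o e C (u n) x) Filter.atTop (nhds 0)

/-!
The Martin kernels `K(1_{[w]}, · | λ)` have bounded distortion: if `x` and `y` agree on their
first `k` symbols, the Green's functions at `x` and `y` differ by at most the factor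
`exp (Σ_{m > k} Var m)`, so every kernel is continuous for the symbolic topology. Since `ρ` is a
weighted sum of bounded coordinates, a diagonal (Tychonoff) argument gives Cauchy subsequences.
A `ρ`-Cauchy sequence that returns infinitely often to a cylinder `[a]` has, by local finiteness,
a subsequence converging symbolically to some `y`; by continuity of the kernels it `ρ`-converges
to `y`, and then so does the whole sequence. The cylinders `[a]` are `ρ`-open, since the indicator
of `[a]` is one of the coordinates of `ρ`; and points with pairwise distinct first symbols, which
exist because the alphabet is infinite, have a Cauchy subsequence without limit in `X⁺`.
-/

section Shift

variable {Adj : S → S → Prop}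

lemma shiftMap_iterate_apply (x : MShift Adj) (n i : ℕ) :
    ((shiftMap Adj)^[n] x).1 i = x.1 (i + n) := by
  induction n generalizing x with
  | zero => rfl
  | succ n ih => rw [Function.iterate_succ_apply, ih]; rfl

lemma val_succ_of_shiftMap_eq {z x : MShift Adj} (h : shiftMap Adj z = x) (i : ℕ) :
    z.1 (i + 1) = x.1 i := by
  subst h; rfl

def prepend (a : S) (x : MShift Adj) (h : Adj a (x.1 0)) : MShift Adj :=
  ⟨fun | 0 => a | i + 1 => x.1 i, fun | 0 => h | i + 1 => x.2 i⟩

lemma prepend_eq_self {z x : MShift Adj} (hz : shiftMap Adj z = x)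
    (h : Adj (z.1 0) (x.1 0)) : prepend (z.1 0) x h = z := by
  apply Subtype.ext; funext i
  cases i with
  | zero => rfl
  | succ i => exact (val_succ_of_shiftMap_eq hz i).symm

lemma adj_of_shiftMap_eq {z x y : MShift Adj} (hz : shiftMap Adj z = x) (h0 : x.1 0 = y.1 0) :
    Adj (z.1 0) (y.1 0) :=
  h0 ▸ val_succ_of_shiftMap_eq hz 0 ▸ z.2 0

def fiberEquiv (x y : MShift Adj) (h0 : x.1 0 = y.1 0) :
    {z // shiftMap Adj z = x} ≃ {z // shiftMap Adj z = y} where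
  toFun z := ⟨prepend (z.1.1 0) y (adj_of_shiftMap_eq z.2 h0), rfl⟩
  invFun z := ⟨prepend (z.1.1 0) x (adj_of_shiftMap_eq z.2 h0.symm), rfl⟩
  left_inv z := Subtype.ext (prepend_eq_self z.2 (adj_of_shiftMap_eq z.2 rfl))
  right_inv z := Subtype.ext (prepend_eq_self z.2 (adj_of_shiftMap_eq z.2 rfl))

lemma mem_cylinder_fiberEquiv {x y : MShift Adj} (h0 : x.1 0 = y.1 0) {k : ℕ}
    (hxy : x.1 ∈ PiNat.cylinder y.1 k) (z : {z // shiftMap Adj z = x}) :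
    z.1.1 ∈ PiNat.cylinder (fiberEquiv x y h0 z).1.1 (k + 1) := by
  rw [PiNat.mem_cylinder_iff] at hxy ⊢
  rintro (_ | i) hi
  · exact rfl
  · exact (val_succ_of_shiftMap_eq z.2 i).trans (hxy i (by omega))

lemma mem_cylSigma_iff_of_mem_cylinder (w : (m : ℕ) × (Fin (m + 1) → S)) {x y : MShift Adj}
    (h : x.1 ∈ PiNat.cylinder y.1 (w.1 + 1)) : x ∈ cylSigma Adj w ↔ y ∈ cylSigma Adj w :=
  forall_congr' fun i => by rw [PiNat.mem_cylinder_iff.1 h i i.isLt]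

lemma indicator_cylSigma_eq_of_mem_cylinder {M : Type*} [Zero M] (c : M)
    (w : (m : ℕ) × (Fin (m + 1) → S)) {x y : MShift Adj}
    (h : x.1 ∈ PiNat.cylinder y.1 (w.1 + 1)) :
    (cylSigma Adj w).indicator (fun _ => c) x = (cylSigma Adj w).indicator (fun _ => c) y :=
  Set.indicator_eq_indicator (mem_cylSigma_iff_of_mem_cylinder w h) rfl

lemma cylSigma_singleton (a : S) : cylSigma Adj ⟨0, fun _ => a⟩ = cylA Adj a := by
  ext x
  exact Fin.forall_fin_one

lemma cylInd_eq_of_mem_cylinder (a : S) {x y : MShift Adj} (h : x.1 ∈ PiNat.cylinder y.1 1) :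
    cylInd Adj a x = cylInd Adj a y := by
  rw [cylInd, ← cylSigma_singleton]
  exact indicator_cylSigma_eq_of_mem_cylinder 1 _ h

end Shift

section Variation

variable {Adj : S → S → Prop} {φ : MShift Adj → ℝ}

lemma abs_sub_le_var (hb : ∀ m, BddAbove (varSet Adj φ m)) {m : ℕ} {x y : MShift Adj}
    (h : x.1 ∈ PiNat.cylinder y.1 m) : |φ x - φ y| ≤ Var Adj φ m :=
  le_csSup (hb m) ⟨x, y, PiNat.mem_cylinder_iff.1 h, rfl⟩

lemma var_nonneg (hb : ∀ m, BddAbove (varSet Adj φ m)) (x : MShift Adj) (m : ℕ) :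
    0 ≤ Var Adj φ m := by
  simpa using abs_sub_le_var hb (PiNat.self_mem_cylinder x.1 m)

noncomputable def varTail (Adj : S → S → Prop) (φ : MShift Adj → ℝ) (k : ℕ) : ℝ :=
  ∑' j, Var Adj φ (j + (k + 1))

lemma varTail_nonneg (hb : ∀ m, BddAbove (varSet Adj φ m)) (x : MShift Adj) (k : ℕ) :
    0 ≤ varTail Adj φ k :=
  tsum_nonneg fun _ => var_nonneg hb x _

lemma varTail_eq_var_add (hsum : Summable (Var Adj φ)) (k : ℕ) :
    varTail Adj φ k = Var Adj φ (k + 1) + varTail Adj φ (k + 1) := by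
  rw [varTail, ((summable_nat_add_iff (k + 1)).2 hsum).tsum_eq_zero_add, zero_add, varTail]
  congr 1
  exact tsum_congr fun j => by rw [add_right_comm, add_assoc]

lemma tendsto_varTail :
    Tendsto (varTail Adj φ) atTop (𝓝 0) :=
  (tendsto_sum_nat_add (Var Adj φ)).comp (tendsto_add_atTop_nat 1)

end Variation

section Green

variable {Adj : S → S → Prop} {φ : MShift Adj → ℝ} {lam : ℝ}

lemma ruelle_mono : Monotone (Ruelle Adj φ) :=
  fun _ _ h _ => ENNReal.tsum_le_tsum fun z => by gcongr; exact h z.1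

lemma green_mono : Monotone (Green Adj φ lam) :=
  fun _ _ h _ => ENNReal.tsum_le_tsum fun n => by gcongr; exact ruelle_mono.iterate n h _

/-- Bounded distortion: matching the fibres by `fiberEquiv`, each application of the transfer
operator costs a factor `exp (Var (k + 1))`, and these factors multiply to `exp (varTail k)`. -/
theorem ruelle_iterate_le_of_mem_cylinder (hb : ∀ m, BddAbove (varSet Adj φ m))
    (hsum : Summable (Var Adj φ)) {f : MShift Adj → ℝ≥0∞} {L : ℕ}
    (hf : ∀ x y : MShift Adj, x.1 ∈ PiNat.cylinder y.1 L → f x = f y) (n : ℕ) {k : ℕ}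
    (hk : 0 < k) (hLk : L ≤ k) {x y : MShift Adj} (hxy : x.1 ∈ PiNat.cylinder y.1 k) :
    (Ruelle Adj φ)^[n] f x ≤
      ENNReal.ofReal (Real.exp (varTail Adj φ k)) * (Ruelle Adj φ)^[n] f y := by
  induction n generalizing k x y with
  | zero =>
    show f x ≤ _ * f y
    rw [hf x y (PiNat.cylinder_anti _ hLk hxy)]
    exact le_mul_of_one_le_left zero_le
      (ENNReal.one_le_ofReal.2 (Real.one_le_exp (varTail_nonneg hb x k)))
  | succ n ih =>
    have h0 : x.1 0 = y.1 0 := PiNat.mem_cylinder_iff.1 hxy 0 hk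
    rw [Function.iterate_succ_apply', Ruelle, Ruelle,
      ← (fiberEquiv x y h0).tsum_eq, ← ENNReal.tsum_mul_left]
    refine ENNReal.tsum_le_tsum fun z => ?_
    set z' := (fiberEquiv x y h0 z).1
    have hzz' : z.1.1 ∈ PiNat.cylinder z'.1 (k + 1) := mem_cylinder_fiberEquiv h0 hxy z
    have hφ : φ z.1 ≤ Var Adj φ (k + 1) + φ z' := by
      linarith [(abs_le.1 (abs_sub_le_var hb hzz')).2]
    calc ENNReal.ofReal (Real.exp (φ z.1)) * (Ruelle Adj φ)^[n] f z.1
        ≤ ENNReal.ofReal (Real.exp (Var Adj φ (k + 1) + φ z')) *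
            (ENNReal.ofReal (Real.exp (varTail Adj φ (k + 1))) * (Ruelle Adj φ)^[n] f z') := by
          gcongr
          exact ih (by omega) (by omega) hzz'
      _ = ENNReal.ofReal (Real.exp (varTail Adj φ k)) *
            (ENNReal.ofReal (Real.exp (φ z')) * (Ruelle Adj φ)^[n] f z') := by
          rw [varTail_eq_var_add hsum k, Real.exp_add, Real.exp_add,
            ENNReal.ofReal_mul (Real.exp_nonneg _), ENNReal.ofReal_mul (Real.exp_nonneg _)]
          ring

theorem green_le_of_mem_cylinder (hb : ∀ m, BddAbove (varSet Adj φ m))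
    (hsum : Summable (Var Adj φ)) {f : MShift Adj → ℝ≥0∞} {L : ℕ}
    (hf : ∀ x y : MShift Adj, x.1 ∈ PiNat.cylinder y.1 L → f x = f y) {k : ℕ}
    (hk : 0 < k) (hLk : L ≤ k) {x y : MShift Adj} (hxy : x.1 ∈ PiNat.cylinder y.1 k) :
    Green Adj φ lam f x ≤
      ENNReal.ofReal (Real.exp (varTail Adj φ k)) * Green Adj φ lam f y := by
  rw [Green, Green, ← ENNReal.tsum_mul_left]
  refine ENNReal.tsum_le_tsum fun n => ?_
  rw [mul_left_comm]
  gcongr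
  exact ruelle_iterate_le_of_mem_cylinder hb hsum hf n hk hLk hxy

lemma ruelle_iterate_cylInd_ne_zero {o : S} (n : ℕ) {x w : MShift Adj} (hw0 : w.1 0 = o)
    (hwn : w.1 n = x.1 0) : (Ruelle Adj φ)^[n] (cylInd Adj o) x ≠ 0 := by
  induction n generalizing x with
  | zero => simp [cylInd, cylA, ← hwn, hw0]
  | succ n ih =>
    rw [Function.iterate_succ_apply', Ruelle, Ne, ENNReal.tsum_eq_zero, not_forall]
    have hadj : Adj (w.1 n) (x.1 0) := hwn ▸ w.2 n
    exact ⟨⟨prepend (w.1 n) x hadj, rfl⟩,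
      mul_ne_zero (ENNReal.ofReal_pos.2 (Real.exp_pos _)).ne' (ih rfl)⟩

lemma green_cylInd_ne_zero (htrans : TransitiveShift Adj) (hlam : 0 < lam) (o : S)
    (x : MShift Adj) : Green Adj φ lam (cylInd Adj o) x ≠ 0 := by
  obtain ⟨n, w, hw0, hwn⟩ := htrans o (x.1 0)
  rw [shiftMap_iterate_apply, zero_add] at hwn
  rw [Green, Ne, ENNReal.tsum_eq_zero, not_forall]
  exact ⟨n, mul_ne_zero (ENNReal.ofReal_pos.2 (by positivity)).ne'
    (ruelle_iterate_cylInd_ne_zero n hw0 hwn)⟩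

lemma green_cylSigma_ne_top (htransient : Transient Adj φ lam)
    (w : (m : ℕ) × (Fin (m + 1) → S)) (x : MShift Adj) :
    Green Adj φ lam ((cylSigma Adj w).indicator 1) x ≠ ⊤ :=
  ne_top_of_le_ne_top (htransient (w.2 0) x)
    (green_mono (Set.indicator_le_indicator_of_subset
      (show cylSigma Adj w ⊆ cylA Adj (w.2 0) from fun _ hz => hz 0) fun _ => zero_le) x)

end Green

lemma abs_sub_le_of_le_mul {r s E c : ℝ} (hE : 1 ≤ E)
    (hrs : r ≤ E * s) (hsr : s ≤ E * r) (hrc : r ≤ c) (hsc : s ≤ c) :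
    |r - s| ≤ (E - 1) * c := by
  rw [abs_sub_le_iff]
  constructor <;> nlinarith

lemma div_le_mul_mul_div {a a' b b' E : ℝ} (hb : 0 < b) (hb' : 0 < b') (ha' : 0 ≤ a')
    (hE : 0 ≤ E) (ha : a ≤ E * a') (hb'b : b' ≤ E * b) : a / b ≤ E * E * (a' / b') := by
  rw [mul_div_assoc', div_le_div_iff₀ hb hb']
  nlinarith [mul_le_mul_of_nonneg_left hb'b (mul_nonneg hE ha')]

section MartinKernel

variable {Adj : S → S → Prop} {φ : MShift Adj → ℝ} {lam : ℝ} {o : S}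

lemma martinKr_nonneg (B : Set (MShift Adj)) (x : MShift Adj) :
    0 ≤ MartinKr Adj φ lam o B x :=
  ENNReal.toReal_nonneg

lemma toReal_green_le_of_mem_cylinder (hb : ∀ m, BddAbove (varSet Adj φ m))
    (hsum : Summable (Var Adj φ)) {f : MShift Adj → ℝ≥0∞} {L : ℕ}
    (hf : ∀ x y : MShift Adj, x.1 ∈ PiNat.cylinder y.1 L → f x = f y) {k : ℕ}
    (hk : 0 < k) (hLk : L ≤ k) {x y : MShift Adj} (hxy : x.1 ∈ PiNat.cylinder y.1 k)
    (hy : Green Adj φ lam f y ≠ ⊤) :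
    (Green Adj φ lam f x).toReal ≤
      Real.exp (varTail Adj φ k) * (Green Adj φ lam f y).toReal := by
  have := ENNReal.toReal_mono (ENNReal.mul_ne_top ENNReal.ofReal_ne_top hy)
    (green_le_of_mem_cylinder hb hsum hf hk hLk hxy)
  rwa [ENNReal.toReal_mul, ENNReal.toReal_ofReal (Real.exp_nonneg _)] at this

/-- Numerator and denominator of the kernel are each distorted by at most `exp (varTail k)`. -/
theorem abs_martinKr_sub_le (hb : ∀ m, BddAbove (varSet Adj φ m))
    (hsum : Summable (Var Adj φ)) (htrans : TransitiveShift Adj) (hlam : 0 < lam)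
    (htransient : Transient Adj φ lam) (w : (m : ℕ) × (Fin (m + 1) → S)) {c : ℝ}
    (hc : ∀ z, MartinKr Adj φ lam o (cylSigma Adj w) z ≤ c) {k : ℕ} (hwk : w.1 + 1 ≤ k)
    {x y : MShift Adj} (hxy : x.1 ∈ PiNat.cylinder y.1 k) :
    |MartinKr Adj φ lam o (cylSigma Adj w) x - MartinKr Adj φ lam o (cylSigma Adj w) y| ≤
      (Real.exp (2 * varTail Adj φ k) - 1) * c := by
  set E := Real.exp (varTail Adj φ k)
  have hk : 0 < k := by omega
  have hnum : ∀ {x y : MShift Adj}, x.1 ∈ PiNat.cylinder y.1 k →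
      (Green Adj φ lam ((cylSigma Adj w).indicator 1) x).toReal ≤
        E * (Green Adj φ lam ((cylSigma Adj w).indicator 1) y).toReal :=
    fun hxy => toReal_green_le_of_mem_cylinder hb hsum
      (fun _ _ => indicator_cylSigma_eq_of_mem_cylinder 1 w) hk hwk hxy
      (green_cylSigma_ne_top htransient w _)
  have hden : ∀ {x y : MShift Adj}, x.1 ∈ PiNat.cylinder y.1 k →
      (Green Adj φ lam (cylInd Adj o) x).toReal ≤
        E * (Green Adj φ lam (cylInd Adj o) y).toReal :=
    fun hxy => toReal_green_le_of_mem_cylinder hb hsum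
      (fun _ _ => cylInd_eq_of_mem_cylinder o) hk hk hxy (htransient o _)
  have hden_pos : ∀ z, 0 < (Green Adj φ lam (cylInd Adj o) z).toReal := fun z =>
    ENNReal.toReal_pos (green_cylInd_ne_zero htrans hlam o z) (htransient o z)
  have hratio : ∀ {x y : MShift Adj}, x.1 ∈ PiNat.cylinder y.1 k →
      MartinKr Adj φ lam o (cylSigma Adj w) x ≤
        E * E * MartinKr Adj φ lam o (cylSigma Adj w) y :=
    fun {x y} hxy => by
      simp only [MartinKr, ENNReal.toReal_div]
      exact div_le_mul_mul_div (hden_pos x) (hden_pos y) ENNReal.toReal_nonneg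
        (Real.exp_nonneg _) (hnum hxy) (hden ((PiNat.mem_cylinder_comm _ _ _).1 hxy))
  have hE : 1 ≤ E := Real.one_le_exp (varTail_nonneg hb x k)
  rw [two_mul, Real.exp_add]
  exact abs_sub_le_of_le_mul (by nlinarith)
    (hratio hxy) (hratio ((PiNat.mem_cylinder_comm _ _ _).1 hxy)) (hc x) (hc y)

theorem tendsto_martinKr_of_mem_cylinder (hb : ∀ m, BddAbove (varSet Adj φ m))
    (hsum : Summable (Var Adj φ)) (htrans : TransitiveShift Adj) (hlam : 0 < lam)
    (htransient : Transient Adj φ lam) (w : (m : ℕ) × (Fin (m + 1) → S)) {c : ℝ}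
    (hc : ∀ z, MartinKr Adj φ lam o (cylSigma Adj w) z ≤ c) {β : Type*} {l : Filter β}
    {v : β → MShift Adj} {y : MShift Adj}
    (hv : ∀ k, ∀ᶠ t in l, (v t).1 ∈ PiNat.cylinder y.1 k) :
    Tendsto (fun t => MartinKr Adj φ lam o (cylSigma Adj w) (v t)) l
      (𝓝 (MartinKr Adj φ lam o (cylSigma Adj w) y)) := by
  have hbound : Tendsto (fun k => (Real.exp (2 * varTail Adj φ k) - 1) * c) atTop (𝓝 0) := by
    simpa using ((((tendsto_varTail (φ := φ)).const_mul 2).rexp).sub_const 1).mul_const c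
  refine Metric.tendsto_nhds.2 fun ε hε => ?_
  obtain ⟨k, hkε, hwk⟩ :=
    ((hbound.eventually_lt_const hε).and (eventually_ge_atTop (w.1 + 1))).exists
  filter_upwards [hv k] with t ht
  rw [Real.dist_eq]
  exact (abs_martinKr_sub_le hb hsum htrans hlam htransient w hc hwk ht).trans_lt hkε

end MartinKernel

lemma dist_le_abs_sub_add_abs_sub (p q : ℝ × ℝ) : dist p q ≤ |p.1 - q.1| + |p.2 - q.2| := by
  rw [Prod.dist_eq, Real.dist_eq, Real.dist_eq]
  exact max_le (by linarith [abs_nonneg (p.2 - q.2)]) (by linarith [abs_nonneg (p.1 - q.1)])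

lemma abs_sub_add_abs_sub_le_two_mul_dist (p q : ℝ × ℝ) :
    |p.1 - q.1| + |p.2 - q.2| ≤ 2 * dist p q := by
  rw [Prod.dist_eq, Real.dist_eq, Real.dist_eq]
  linarith [le_max_left |p.1 - q.1| |p.2 - q.2|, le_max_right |p.1 - q.1| |p.2 - q.2|]

section MartinMetric

def MartinKrBoundedBy (Adj : S → S → Prop) (φ : MShift Adj → ℝ) (lam : ℝ) (o : S)
    (e : ℕ → (m : ℕ) × (Fin (m + 1) → S)) (C : ℕ → ℝ) : Prop :=
  ∀ i x, MartinKr Adj φ lam o (cylSigma Adj (e i)) x ≤ C i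

noncomputable def martinWeight (C : ℕ → ℝ) (i : ℕ) : ℝ := ((2 : ℝ) ^ i * (C i + 1))⁻¹

noncomputable def martinCoord (Adj : S → S → Prop) (φ : MShift Adj → ℝ) (lam : ℝ) (o : S)
    (e : ℕ → (m : ℕ) × (Fin (m + 1) → S)) (i : ℕ) (x : MShift Adj) : ℝ × ℝ :=
  (MartinKr Adj φ lam o (cylSigma Adj (e i)) x, (cylSigma Adj (e i)).indicator (fun _ => 1) x)

noncomputable def martinTerm (Adj : S → S → Prop) (φ : MShift Adj → ℝ) (lam : ℝ) (o : S)
    (e : ℕ → (m : ℕ) × (Fin (m + 1) → S)) (C : ℕ → ℝ) (i : ℕ) (x y : MShift Adj) :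
    ℝ :=
  martinWeight C i * (|(martinCoord Adj φ lam o e i x).1 - (martinCoord Adj φ lam o e i y).1| +
    |(martinCoord Adj φ lam o e i x).2 - (martinCoord Adj φ lam o e i y).2|)

variable {Adj : S → S → Prop} {φ : MShift Adj → ℝ} {lam : ℝ} {o : S}
  {e : ℕ → (m : ℕ) × (Fin (m + 1) → S)} {C : ℕ → ℝ}

lemma martinRho_eq_tsum (x y : MShift Adj) :
    martinRho Adj φ lam o e C x y = ∑' i, martinTerm Adj φ lam o e C i x y :=
  rfl

lemma martinCoord_mem (hC : MartinKrBoundedBy Adj φ lam o e C) (i : ℕ) (x : MShift Adj) :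
    martinCoord Adj φ lam o e i x ∈ Set.Icc 0 (C i) ×ˢ Set.Icc 0 1 := by
  refine ⟨⟨martinKr_nonneg _ x, hC i x⟩, ?_⟩
  by_cases hx : x ∈ cylSigma Adj (e i) <;> simp [martinCoord, hx]

lemma martinWeight_pos (hC : MartinKrBoundedBy Adj φ lam o e C) (x : MShift Adj) (i : ℕ) :
    0 < martinWeight C i := by
  have := (martinKr_nonneg _ x).trans (hC i x)
  unfold martinWeight
  positivity

lemma martinWeight_le_one (hC : MartinKrBoundedBy Adj φ lam o e C) (x : MShift Adj) (i : ℕ) :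
    martinWeight C i ≤ 1 := by
  have := (martinKr_nonneg _ x).trans (hC i x)
  unfold martinWeight
  exact inv_le_one_of_one_le₀ (one_le_mul_of_one_le_of_one_le (one_le_pow₀ one_le_two)
    (by linarith))

lemma martinTerm_nonneg (hC : MartinKrBoundedBy Adj φ lam o e C) (i : ℕ) (x y : MShift Adj) :
    0 ≤ martinTerm Adj φ lam o e C i x y :=
  mul_nonneg (martinWeight_pos hC x i).le (by positivity)

lemma martinTerm_le_half_pow (hC : MartinKrBoundedBy Adj φ lam o e C) (i : ℕ)
    (x y : MShift Adj) :
    martinTerm Adj φ lam o e C i x y ≤ (1 / 2) ^ i := by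
  obtain ⟨⟨hx0, hxC⟩, hx1, hx1'⟩ := martinCoord_mem hC i x
  obtain ⟨⟨hy0, hyC⟩, hy1, hy1'⟩ := martinCoord_mem hC i y
  have hsum : |(martinCoord Adj φ lam o e i x).1 - (martinCoord Adj φ lam o e i y).1| +
      |(martinCoord Adj φ lam o e i x).2 - (martinCoord Adj φ lam o e i y).2| ≤ C i + 1 := by
    have h1 := abs_sub_le_iff.2 ⟨(sub_le_self _ hy0).trans hxC, (sub_le_self _ hx0).trans hyC⟩
    have h2 := abs_sub_le_iff.2 ⟨(sub_le_self _ hy1).trans hx1', (sub_le_self _ hx1).trans hy1'⟩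
    linarith
  calc martinTerm Adj φ lam o e C i x y ≤ martinWeight C i * (C i + 1) :=
        mul_le_mul_of_nonneg_left hsum (martinWeight_pos hC x i).le
    _ = (1 / 2) ^ i := by
        have : C i + 1 ≠ 0 := by linarith
        rw [martinWeight, mul_inv, inv_mul_cancel_right₀ this, one_div, inv_pow]

lemma summable_martinTerm (hC : MartinKrBoundedBy Adj φ lam o e C) (x y : MShift Adj) :
    Summable fun i => martinTerm Adj φ lam o e C i x y :=
  summable_geometric_two.of_nonneg_of_le (fun i => martinTerm_nonneg hC i x y)
    (fun i => martinTerm_le_half_pow hC i x y)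

lemma martinWeight_mul_dist_le_martinRho (hC : MartinKrBoundedBy Adj φ lam o e C)
    (i : ℕ) (x y : MShift Adj) :
    martinWeight C i * dist (martinCoord Adj φ lam o e i x) (martinCoord Adj φ lam o e i y) ≤
      martinRho Adj φ lam o e C x y :=
  (mul_le_mul_of_nonneg_left (dist_le_abs_sub_add_abs_sub _ _)
      (martinWeight_pos hC x i).le).trans
    ((summable_martinTerm hC x y).le_tsum i fun j _ => martinTerm_nonneg hC j x y)

/-- Dominated convergence for the series `ρ`, whose `i`-th term is at most `2⁻ⁱ`. -/
theorem tendsto_martinRho_zero (hC : MartinKrBoundedBy Adj φ lam o e C)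
    {β : Type*} {l : Filter β} {a b : β → MShift Adj}
    (h : ∀ i, Tendsto (fun t => dist (martinCoord Adj φ lam o e i (a t))
      (martinCoord Adj φ lam o e i (b t))) l (𝓝 0)) :
    Tendsto (fun t => martinRho Adj φ lam o e C (a t) (b t)) l (𝓝 0) := by
  have hterm : ∀ i, Tendsto (fun t => martinTerm Adj φ lam o e C i (a t) (b t)) l (𝓝 0) :=
    fun i => squeeze_zero (fun t => martinTerm_nonneg hC i _ _)
      (fun t => (mul_le_of_le_one_left (by positivity) (martinWeight_le_one hC (a t) i)).trans
        (abs_sub_add_abs_sub_le_two_mul_dist _ _))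
      (by simpa using (h i).const_mul 2)
  simpa [martinRho_eq_tsum] using tendsto_tsum_of_dominated_convergence summable_geometric_two hterm
    (Eventually.of_forall fun t i => by
      rw [Real.norm_of_nonneg (martinTerm_nonneg hC i _ _)]
      exact martinTerm_le_half_pow hC i _ _)

lemma rhoCauchy_of_tendsto {u : ℕ → MShift Adj}
    (h : Tendsto (fun p : ℕ × ℕ => martinRho Adj φ lam o e C (u p.1) (u p.2))
      (atTop ×ˢ atTop) (𝓝 0)) :
    RhoCauchy Adj φ lam o e C u := fun ε hε => by
  rw [prod_atTop_atTop_eq] at h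
  exact eventually_atTop_prod_self'.1 (h.eventually_lt_const hε)

lemma cauchySeq_martinCoord (hC : MartinKrBoundedBy Adj φ lam o e C)
    {u : ℕ → MShift Adj} (hu : RhoCauchy Adj φ lam o e C u) (i : ℕ) :
    CauchySeq fun n => martinCoord Adj φ lam o e i (u n) := by
  have hw := martinWeight_pos hC (u 0) i
  refine Metric.cauchySeq_iff.2 fun ε hε => ?_
  obtain ⟨N, hN⟩ := hu (martinWeight C i * ε) (mul_pos hw hε)
  exact ⟨N, fun m hm n hn => lt_of_mul_lt_mul_left
    ((martinWeight_mul_dist_le_martinRho hC i _ _).trans_lt (hN m hm n hn)) hw.le⟩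

theorem exists_rhoCauchy_subseq (hC : MartinKrBoundedBy Adj φ lam o e C)
    (u : ℕ → MShift Adj) :
    ∃ g : ℕ → ℕ, StrictMono g ∧ RhoCauchy Adj φ lam o e C (u ∘ g) := by
  obtain ⟨p, -, g, hg, hp⟩ :=
    (isCompact_univ_pi fun i => isCompact_Icc.prod (isCompact_Icc (a := (0 : ℝ)) (b := 1))
      ).tendsto_subseq (x := fun n i => martinCoord Adj φ lam o e i (u n))
      fun n i _ => martinCoord_mem hC i (u n)
  refine ⟨g, hg, rhoCauchy_of_tendsto (tendsto_martinRho_zero hC fun i => ?_)⟩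
  have hi := tendsto_pi_nhds.1 hp i
  simpa using (hi.comp tendsto_fst).dist (hi.comp tendsto_snd)

/-- The indicator of `[x₀]` is one of the coordinates of `ρ`. -/
lemma val_zero_eq_of_martinRho_lt (hC : MartinKrBoundedBy Adj φ lam o e C)
    {i : ℕ} {x z : MShift Adj} (hi : e i = ⟨0, fun _ => x.1 0⟩)
    (h : martinRho Adj φ lam o e C z x < martinWeight C i) : z.1 0 = x.1 0 := by
  by_contra hz
  have hmem : ∀ y : MShift Adj, y ∈ cylSigma Adj (e i) ↔ y.1 0 = x.1 0 := fun y => by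
    rw [hi, cylSigma_singleton]; rfl
  have hdist : 1 ≤ dist (martinCoord Adj φ lam o e i z) (martinCoord Adj φ lam o e i x) := by
    refine le_trans ?_ (le_max_right _ _)
    simp [martinCoord, hmem, hz]
  have := martinWeight_mul_dist_le_martinRho hC i z x
  nlinarith [martinWeight_pos hC x i]

end MartinMetric

section Extraction

variable {Adj : S → S → Prop}

def reachableIn (Adj : S → S → Prop) (a : S) : ℕ → Set S
  | 0 => {a}
  | i + 1 => ⋃ b ∈ reachableIn Adj a i, {c | Adj b c}

lemma finite_reachableIn (hloc : LocFin Adj) (a : S) : ∀ i, (reachableIn Adj a i).Finite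
  | 0 => Set.finite_singleton a
  | i + 1 => (finite_reachableIn hloc a i).biUnion fun b _ => hloc b

lemma mem_reachableIn (x : MShift Adj) : ∀ i, x.1 i ∈ reachableIn Adj (x.1 0) i
  | 0 => rfl
  | i + 1 => Set.mem_biUnion (mem_reachableIn x i) (x.2 i)

/-- Tychonoff on the product of the finite sets `reachableIn Adj a i`. -/
theorem exists_subseq_mem_cylinder (hloc : LocFin Adj) {a : S} (v : ℕ → MShift Adj)
    (hv : ∀ n, (v n).1 0 = a) :
    ∃ (y : MShift Adj) (h : ℕ → ℕ), StrictMono h ∧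
      ∀ k, ∀ᶠ n in atTop, (v (h n)).1 ∈ PiNat.cylinder y.1 k := by
  let _ : TopologicalSpace S := ⊥
  have : DiscreteTopology S := ⟨rfl⟩
  obtain ⟨y, -, h, hh, hy⟩ :=
    (isCompact_univ_pi fun i => (finite_reachableIn hloc a i).isCompact).tendsto_subseq
      (x := fun n => (v n).1) fun n i _ => hv n ▸ mem_reachableIn (v n) i
  have hcoord : ∀ i, ∀ᶠ n in atTop, (v (h n)).1 i = y i := fun i => by
    simpa [nhds_discrete] using tendsto_pi_nhds.1 hy i
  refine ⟨⟨y, fun i => ?_⟩, h, hh, fun k => ?_⟩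
  · obtain ⟨n, hn, hn'⟩ := ((hcoord i).and (hcoord (i + 1))).exists
    exact hn ▸ hn' ▸ (v (h n)).2 i
  · simpa [PiNat.mem_cylinder_iff] using (Set.finite_Iio k).eventually_all.2 fun i _ => hcoord i

end Extraction

section Boundary

variable {Adj : S → S → Prop} {φ : MShift Adj → ℝ} {lam : ℝ} {o : S}
  {e : ℕ → (m : ℕ) × (Fin (m + 1) → S)} {C : ℕ → ℝ}

theorem tendsto_martinCoord_of_mem_cylinder (hb : ∀ m, BddAbove (varSet Adj φ m))
    (hsum : Summable (Var Adj φ)) (htrans : TransitiveShift Adj) (hlam : 0 < lam)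
    (htransient : Transient Adj φ lam) (hC : MartinKrBoundedBy Adj φ lam o e C) (i : ℕ)
    {β : Type*} {l : Filter β} {v : β → MShift Adj} {y : MShift Adj}
    (hv : ∀ k, ∀ᶠ t in l, (v t).1 ∈ PiNat.cylinder y.1 k) :
    Tendsto (fun t => martinCoord Adj φ lam o e i (v t)) l
      (𝓝 (martinCoord Adj φ lam o e i y)) :=
  (tendsto_martinKr_of_mem_cylinder hb hsum htrans hlam htransient (e i) (hC i) hv).prodMk_nhds
    (tendsto_const_nhds.congr' ((hv ((e i).1 + 1)).mono fun _ ht =>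
      (indicator_cylSigma_eq_of_mem_cylinder 1 (e i) ht).symm))

theorem exists_rhoTendsto_of_frequently (hb : ∀ m, BddAbove (varSet Adj φ m))
    (hsum : Summable (Var Adj φ)) (htrans : TransitiveShift Adj) (hlam : 0 < lam)
    (htransient : Transient Adj φ lam) (hloc : LocFin Adj)
    (hC : MartinKrBoundedBy Adj φ lam o e C) {u : ℕ → MShift Adj}
    (hu : RhoCauchy Adj φ lam o e C u) {a : S} (ha : ∃ᶠ n in atTop, (u n).1 0 = a) :
    ∃ y, RhoTendsto Adj φ lam o e C u y := by
  obtain ⟨g, hg, hga⟩ := extraction_of_frequently_atTop ha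
  obtain ⟨y, h, hh, hy⟩ := exists_subseq_mem_cylinder hloc (fun n => u (g n)) hga
  refine ⟨y, tendsto_martinRho_zero hC fun i => ?_⟩
  have hsub := tendsto_martinCoord_of_mem_cylinder hb hsum htrans hlam htransient hC i hy
  have hlim := tendsto_nhds_of_cauchySeq_of_subseq (cauchySeq_martinCoord hC hu i)
    (hg.comp hh).tendsto_atTop hsub
  exact tendsto_iff_dist_tendsto_zero.1 hlim

lemma not_rhoTendsto_of_injective (hC : MartinKrBoundedBy Adj φ lam o e C)
    (he : Function.Surjective e) {u : ℕ → MShift Adj}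
    (hu : Function.Injective fun n => (u n).1 0) (x : MShift Adj) :
    ¬RhoTendsto Adj φ lam o e C u x := fun hx => by
  obtain ⟨i, hi⟩ := he ⟨0, fun _ => x.1 0⟩
  obtain ⟨N, hN⟩ := ((hx.eventually_lt_const (martinWeight_pos hC x i)).mono fun _ hn =>
    val_zero_eq_of_martinRho_lt hC hi hn).exists_forall_of_atTop
  exact N.succ_ne_self (hu ((hN _ N.le_succ).trans (hN N le_rfl).symm))

end Boundary

theorem martin_compactification_compact_general [Infinite S]
    (Adj : S → S → Prop) (htrans : TransitiveShift Adj) (hloc : LocFin Adj)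
    (φ : MShift Adj → ℝ) (hvar : SummableVar Adj φ) (lam : ℝ) (hlam : 0 < lam)
    (htransient : Transient Adj φ lam) (o : S)
    (e : ℕ → (m : ℕ) × (Fin (m + 1) → S)) (he : Function.Surjective e)
    (C : ℕ → ℝ) (hC : ∀ (i : ℕ) (x : MShift Adj),
      MartinKr Adj φ lam o (cylSigma Adj (e i)) x ≤ C i) :
    (∀ u : ℕ → MShift Adj, ∃ g : ℕ → ℕ, StrictMono g ∧
        RhoCauchy Adj φ lam o e C (u ∘ g)) ∧
    (∃ u : ℕ → MShift Adj, RhoCauchy Adj φ lam o e C u ∧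
        ¬∃ x : MShift Adj, RhoTendsto Adj φ lam o e C u x) ∧
    (∀ x : MShift Adj, ∃ ε > (0 : ℝ), ∀ u : ℕ → MShift Adj,
        RhoCauchy Adj φ lam o e C u →
        (∀ᶠ n in Filter.atTop, martinRho Adj φ lam o e C (u n) x < ε) →
        ∃ y : MShift Adj, RhoTendsto Adj φ lam o e C u y) ∧
    (∀ u : ℕ → MShift Adj, RhoCauchy Adj φ lam o e C u →
        (¬∃ x : MShift Adj, RhoTendsto Adj φ lam o e C u x) →
        ∀ a : S, ∀ᶠ n in Filter.atTop, (u n).1 0 ≠ a) := by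
  obtain ⟨hb, hsum⟩ := hvar
  have hlim : ∀ {u : ℕ → MShift Adj}, RhoCauchy Adj φ lam o e C u → ∀ {a : S},
      (∃ᶠ n in atTop, (u n).1 0 = a) → ∃ y, RhoTendsto Adj φ lam o e C u y :=
    exists_rhoTendsto_of_frequently hb hsum htrans hlam htransient hloc hC
  refine ⟨exists_rhoCauchy_subseq hC, ?_, fun x => ?_, fun u hu hno a => ?_⟩
  · have hpoint (a : S) : ∃ x : MShift Adj, x.1 0 = a := by
      obtain ⟨_, x, hx, -⟩ := htrans a a
      exact ⟨x, hx⟩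
    choose v hv using hpoint
    obtain ⟨g, hg, hcauchy⟩ := exists_rhoCauchy_subseq hC (v ∘ Infinite.natEmbedding S)
    refine ⟨_, hcauchy, fun ⟨x, hx⟩ => not_rhoTendsto_of_injective hC he ?_ x hx⟩
    simp only [Function.comp_apply, hv]
    exact (Infinite.natEmbedding S).injective.comp hg.injective
  · obtain ⟨i, hi⟩ := he ⟨0, fun _ => x.1 0⟩
    exact ⟨martinWeight C i, martinWeight_pos hC x i, fun u hu hlt =>
      hlim hu (hlt.mono fun _ hn => val_zero_eq_of_martinRho_lt hC hi hn).frequently⟩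
  · by_contra h
    exact hno (hlim hu ((not_eventually.1 h).mono fun _ => not_not.1))

/-- The Martin compactification is compact, the Martin boundary is closed and non-empty,
and sequences converging to a boundary point escape every compact set.  Stated
sequentially: (1) every sequence has a `ρ`-Cauchy subsequence (compactness of the
completion); (2) there is a `ρ`-Cauchy sequence with no limit in `X⁺` (the boundary is
non-empty); (3) around every point of `X⁺` there is a `ρ`-ball in which every `ρ`-Cauchy
sequence has a limit in `X⁺` (the boundary is closed, i.e. `X⁺` is open in the
compactification); (4) a `ρ`-Cauchy sequence with no limit in `X⁺` eventually leaves
every cylinder `[a]`, i.e. every compact subset of `(X⁺, d)`. -/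
theorem martin_compactification_compact [Countable S] [Infinite S]
    (Adj : S → S → Prop) (htrans : TransitiveShift Adj) (hloc : LocFin Adj)
    (φ : MShift Adj → ℝ) (hvar : SummableVar Adj φ) (lam : ℝ) (hlam : 0 < lam)
    (htransient : Transient Adj φ lam) (o : S)
    (e : ℕ → (m : ℕ) × (Fin (m + 1) → S)) (he : Function.Surjective e)
    (C : ℕ → ℝ) (hC : ∀ (i : ℕ) (x : MShift Adj),
      MartinKr Adj φ lam o (cylSigma Adj (e i)) x ≤ C i) :
    (∀ u : ℕ → MShift Adj, ∃ g : ℕ → ℕ, StrictMono g ∧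
        RhoCauchy Adj φ lam o e C (u ∘ g)) ∧
    (∃ u : ℕ → MShift Adj, RhoCauchy Adj φ lam o e C u ∧
        ¬∃ x : MShift Adj, RhoTendsto Adj φ lam o e C u x) ∧
    (∀ x : MShift Adj, ∃ ε > (0 : ℝ), ∀ u : ℕ → MShift Adj,
        RhoCauchy Adj φ lam o e C u →
        (∀ᶠ n in Filter.atTop, martinRho Adj φ lam o e C (u n) x < ε) →
        ∃ y : MShift Adj, RhoTendsto Adj φ lam o e C u y) ∧
    (∀ u : ℕ → MShift Adj, RhoCauchy Adj φ lam o e C u →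
        (¬∃ x : MShift Adj, RhoTendsto Adj φ lam o e C u x) →
        ∀ a : S, ∀ᶠ n in Filter.atTop, (u n).1 0 ≠ a) :=
  martin_compactification_compact_general Adj htrans hloc φ hvar lam hlam htransient o e he C hC
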